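/- arXiv:0907.4698 — 3 statements merged into one kernel-verified Lean document; each statement's English description precedes it below -/
import Mathlib

section
/- Let Σ be a p×p real symmetric positive semidefinite matrix with Σ ≠ 0, let p ≥ 2 and n ≥ 1 be integers. Then the denominator (n+1−2/p)·Tr(Σ²) + (1−n/p)·Tr(Σ)² is strictly positive, and the oracle shrinkage coefficient ρ_O = ((1−2/p)·Tr(Σ²) + Tr(Σ)²) / ((n+1−2/p)·Tr(Σ²) + (1−n/p)·Tr(Σ)²) satisfies 0 < ρ_O ≤ 1. -/
/-!
In an orthonormal eigenbasis, `Tr Σ = ∑ λᵢ` and `Tr Σ² = ∑ λᵢ²` with `λᵢ ≥ 0` not all zero, so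
`0 < Tr Σ² ≤ (Tr Σ)² ≤ p Tr Σ²`. The first two inequalities make the numerator positive; the
last one makes the denominator minus the numerator, namely `(n/p)(p Tr Σ² - (Tr Σ)²)`,
nonnegative.
-/

open Matrix

namespace Matrix

variable {ι 𝕜 : Type*} [Fintype ι] [DecidableEq ι] [RCLike 𝕜]

open Unitary in
theorem IsHermitian.trace_mul_self_eq_sum_sq_eigenvalues {A : Matrix ι ι 𝕜}
    (hA : A.IsHermitian) : (A * A).trace = ∑ i, (hA.eigenvalues i : 𝕜) ^ 2 := by
  conv_lhs => rw [hA.spectral_theorem, ← map_mul, conjStarAlgAut_apply, trace_mul_cycle,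
    coe_star_mul_self, one_mul, diagonal_mul_diagonal, trace_diagonal]
  simp [sq]

variable {A : Matrix ι ι ℝ}

theorem IsHermitian.trace_mul_self_pos (hA : A.IsHermitian) (hA0 : A ≠ 0) :
    0 < (A * A).trace := by
  obtain ⟨i, hi⟩ : ∃ i, hA.eigenvalues i ≠ 0 :=
    Function.ne_iff.mp (hA.eigenvalues_eq_zero_iff.not.mpr hA0)
  rw [hA.trace_mul_self_eq_sum_sq_eigenvalues]
  exact Finset.sum_pos' (fun j _ ↦ by positivity) ⟨i, Finset.mem_univ i, by positivity⟩

theorem IsHermitian.trace_sq_le_card_mul_trace_mul_self (hA : A.IsHermitian) :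
    A.trace ^ 2 ≤ Fintype.card ι * (A * A).trace := by
  rw [hA.trace_eq_sum_eigenvalues, hA.trace_mul_self_eq_sum_sq_eigenvalues]
  simpa using sq_sum_le_card_mul_sum_sq (s := Finset.univ) (f := hA.eigenvalues)

theorem PosSemidef.trace_mul_self_le_trace_sq (hA : A.PosSemidef) :
    (A * A).trace ≤ A.trace ^ 2 := by
  rw [hA.1.trace_eq_sum_eigenvalues, hA.1.trace_mul_self_eq_sum_sq_eigenvalues]
  simpa using Finset.sum_sq_le_sq_sum_of_nonneg fun i _ ↦ hA.eigenvalues_nonneg i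

end Matrix

theorem shrinkage_numerator_pos {p t₁ t₂ : ℝ} (hp : 2 ≤ p) (ht₂ : 0 < t₂) (h : t₂ ≤ t₁ ^ 2) :
    0 < (1 - 2 / p) * t₂ + t₁ ^ 2 := by
  have : 0 ≤ 1 - 2 / p := sub_nonneg.mpr ((div_le_one (by linarith)).mpr hp)
  nlinarith

theorem shrinkage_numerator_le_denominator {p n t₁ t₂ : ℝ} (hp : 0 < p) (hn : 0 ≤ n)
    (h : t₁ ^ 2 ≤ p * t₂) :
    (1 - 2 / p) * t₂ + t₁ ^ 2 ≤ (n + 1 - 2 / p) * t₂ + (1 - n / p) * t₁ ^ 2 := by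
  have key : 0 ≤ n / p * (p * t₂ - t₁ ^ 2) := by
    have := sub_nonneg.mpr h
    positivity
  have hdiff : (n + 1 - 2 / p) * t₂ + (1 - n / p) * t₁ ^ 2 - ((1 - 2 / p) * t₂ + t₁ ^ 2) =
      n / p * (p * t₂ - t₁ ^ 2) := by
    field_simp
    ring
  linarith

theorem oracle_shrinkage_coefficient_bounds_general
    (p n : ℕ) (hp : 2 ≤ p)
    (C : Matrix (Fin p) (Fin p) ℝ) (hC : C.PosSemidef) (hC0 : C ≠ 0) :
    0 < ((n : ℝ) + 1 - 2 / (p : ℝ)) * (C * C).trace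
        + (1 - (n : ℝ) / (p : ℝ)) * C.trace ^ 2 ∧
    0 < ((1 - 2 / (p : ℝ)) * (C * C).trace + C.trace ^ 2)
        / (((n : ℝ) + 1 - 2 / (p : ℝ)) * (C * C).trace
            + (1 - (n : ℝ) / (p : ℝ)) * C.trace ^ 2) ∧
    ((1 - 2 / (p : ℝ)) * (C * C).trace + C.trace ^ 2)
        / (((n : ℝ) + 1 - 2 / (p : ℝ)) * (C * C).trace
            + (1 - (n : ℝ) / (p : ℝ)) * C.trace ^ 2) ≤ 1 := by
  have hp' : (2 : ℝ) ≤ p := by exact_mod_cast hp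
  have hnum := shrinkage_numerator_pos hp' (hC.1.trace_mul_self_pos hC0)
    hC.trace_mul_self_le_trace_sq
  have hle := shrinkage_numerator_le_denominator (p := (p : ℝ)) (n := n) (by linarith)
    n.cast_nonneg    (by simpa using hC.1.trace_sq_le_card_mul_trace_mul_self)
  have hden := hnum.trans_le hle
  exact ⟨hden, div_pos hnum hden, (div_le_one hden).mpr hle⟩

/-- positivity of the denominator and bounds `0 < ρ_O ≤ 1` for the
oracle shrinkage coefficient. -/
theorem oracle_shrinkage_coefficient_bounds
    (p n : ℕ) (hp : 2 ≤ p) (hn : 1 ≤ n)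
    (C : Matrix (Fin p) (Fin p) ℝ) (hC : C.PosSemidef) (hC0 : C ≠ 0) :
    0 < ((n : ℝ) + 1 - 2 / (p : ℝ)) * (C * C).trace
        + (1 - (n : ℝ) / (p : ℝ)) * C.trace ^ 2 ∧
    0 < ((1 - 2 / (p : ℝ)) * (C * C).trace + C.trace ^ 2)
        / (((n : ℝ) + 1 - 2 / (p : ℝ)) * (C * C).trace
            + (1 - (n : ℝ) / (p : ℝ)) * C.trace ^ 2) ∧
    ((1 - 2 / (p : ℝ)) * (C * C).trace + C.trace ^ 2)
        / (((n : ℝ) + 1 - 2 / (p : ℝ)) * (C * C).trace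
            + (1 - (n : ℝ) / (p : ℝ)) * C.trace ^ 2) ≤ 1 :=
  oracle_shrinkage_coefficient_bounds_general p n hp C hC hC0
end

section
/- Let n ≥ 2 be an integer and let μ be the Haar probability measure on the orthogonal group O(n) of n×n real matrices. Then ∫ Q₁₁⁴ dμ(Q) = 3/(n(n+2)) and ∫ Q₁₁²·Q₂₁² dμ(Q) = 1/(n(n+2)). -/
open MeasureTheory Matrix

/-- The Borel (= product) σ-algebra on matrices. -/
instance matrixMeasurableSpace {m n α : Type*} [MeasurableSpace α] :
    MeasurableSpace (Matrix m n α) :=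
  inferInstanceAs (MeasurableSpace (m → n → α))

/-! Write `J k l = ∫ Q_{kc}² Q_{lc}² dμ` for a fixed column `c`. Left multiplication by a quarter
turn in the `(k, l)`-plane permutes the squared entries of a column like the transposition of `k`
and `l`, so `J` takes one value `A` on the diagonal and one value `B` off it. The rotation by `π/4`
in the `(i, j)`-plane maps `(x, y)` to `((x - y)/√2, (x + y)/√2)` and `x⁴ + y⁴` to
`(x⁴ + 6x²y² + y⁴)/2`, so invariance gives `A = 3B`. Since every column is a unit vector,
`∑ₖ ∑ₗ J k l = 1`, that is `nA + n(n - 1)B = n(n + 2)B = 1`. -/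

instance Matrix.borelSpace {m n α : Type*} [Countable m] [Countable n] [TopologicalSpace α]
    [MeasurableSpace α] [SecondCountableTopology α] [BorelSpace α] :
    BorelSpace (Matrix m n α) :=
  inferInstanceAs (BorelSpace (m → n → α))

namespace Matrix

variable {ι R : Type*} [DecidableEq ι] [CommRing R]

/-- The rotation `(x, y) ↦ (c x - s y, s x + c y)` in the `(i, j)`-coordinate plane. -/
def planeRotation (i j : ι) (c s : R) : Matrix ι ι R :=
  1 + (c - 1) • (single i i 1 + single j j 1) + s • (single j i 1 - single i j 1)

variable {i j : ι} (c s : R)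

lemma planeRotation_transpose : (planeRotation i j c s)ᵀ = planeRotation i j c (-s) := by
  simp only [planeRotation, transpose_add, transpose_sub, transpose_smul, transpose_one,
    transpose_single]
  module

variable [Fintype ι]

lemma planeRotation_mul_apply_left (hij : i ≠ j) (M : Matrix ι ι R) (b : ι) :
    (planeRotation i j c s * M) i b = c * M i b - s * M j b := by
  simp [planeRotation, add_mul, sub_mul, hij]
  ring

lemma planeRotation_mul_apply_right (hij : i ≠ j) (M : Matrix ι ι R) (b : ι) :
    (planeRotation i j c s * M) j b = s * M i b + c * M j b := by
  simp [planeRotation, add_mul, sub_mul, hij.symm]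
  ring

lemma planeRotation_mul_apply_of_ne {a : ι} (hai : a ≠ i) (haj : a ≠ j) (M : Matrix ι ι R)
    (b : ι) : (planeRotation i j c s * M) a b = M a b := by
  simp [planeRotation, add_mul, sub_mul, hai, haj]

lemma planeRotation_mem_orthogonalGroup (hij : i ≠ j) (h : c ^ 2 + s ^ 2 = 1) :
    planeRotation i j c s ∈ orthogonalGroup ι R := by
  rw [mem_orthogonalGroup_iff', planeRotation_transpose]
  ext a b
  rcases eq_or_ne a i with rfl | hai
  · rw [planeRotation_mul_apply_left _ _ hij]
    rcases eq_or_ne b a with rfl | hb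
    · simp [planeRotation, hij, hij.symm]
      linear_combination h
    rcases eq_or_ne b j with rfl | hbj
    · simp [planeRotation, hij, hij.symm]
      ring
    simp [planeRotation, hij, Ne.symm hb, Ne.symm hbj]
  rcases eq_or_ne a j with rfl | haj
  · rw [planeRotation_mul_apply_right _ _ hij]
    rcases eq_or_ne b a with rfl | hb
    · simp [planeRotation, hij, hij.symm]
      linear_combination h
    rcases eq_or_ne b i with rfl | hbi
    · simp [planeRotation, hij, hij.symm]
      ring
    simp [planeRotation, hij, Ne.symm hb, Ne.symm hbi]
  rw [planeRotation_mul_apply_of_ne _ _ hai haj]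
  simp [planeRotation, Ne.symm hai, Ne.symm haj, one_apply]

lemma sq_planeRotation_zero_one_mul_apply (hij : i ≠ j) (M : Matrix ι ι R) (a b : ι) :
    (planeRotation i j (0 : R) 1 * M) a b ^ 2 = M (Equiv.swap i j a) b ^ 2 := by
  rcases eq_or_ne a i with rfl | hai
  · rw [planeRotation_mul_apply_left _ _ hij, Equiv.swap_apply_left]
    ring
  rcases eq_or_ne a j with rfl | haj
  · rw [planeRotation_mul_apply_right _ _ hij, Equiv.swap_apply_right]
    ring
  rw [planeRotation_mul_apply_of_ne _ _ hai haj, Equiv.swap_apply_of_ne_of_ne hai haj]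

lemma sum_sq_apply_of_mem_orthogonalGroup {Q : Matrix ι ι ℝ} (hQ : Q ∈ orthogonalGroup ι ℝ)
    (c : ι) : ∑ k, Q k c ^ 2 = 1 := by
  simpa [mul_apply, sq] using congr_fun₂ ((mem_orthogonalGroup_iff' ι ℝ).1 hQ) c c

end Matrix

namespace OrthogonalGroup

variable {ι : Type*} [Fintype ι] [DecidableEq ι] (μ : Measure (orthogonalGroup ι ℝ))

lemma integral_comp_mul_left [μ.IsMulLeftInvariant] (f : Matrix ι ι ℝ → ℝ) {g : Matrix ι ι ℝ}
    (hg : g ∈ orthogonalGroup ι ℝ) :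
    ∫ Q : orthogonalGroup ι ℝ, f (g * Q) ∂μ = ∫ Q, f Q ∂μ :=
  integral_mul_left_eq_self (fun Q : orthogonalGroup ι ℝ ↦ f Q) ⟨g, hg⟩

lemma integrable_sq_mul_sq [IsFiniteMeasure μ] (i j c : ι) :
    Integrable
      (fun Q : orthogonalGroup ι ℝ ↦ (Q : Matrix ι ι ℝ) i c ^ 2 * (Q : Matrix ι ι ℝ) j c ^ 2)
      μ := by
  have hentry (a : ι) : Continuous fun Q : orthogonalGroup ι ℝ ↦ (Q : Matrix ι ι ℝ) a c :=
    continuous_subtype_val.matrix_elem a c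
  refine Integrable.of_bound (((hentry i).pow 2).mul ((hentry j).pow 2)).aestronglyMeasurable 1
    (ae_of_all _ fun Q ↦ ?_)
  rw [norm_mul, norm_pow, norm_pow]
  exact mul_le_one₀ (pow_le_one₀ (norm_nonneg _) (entry_norm_bound_of_unitary Q.2 _ _))
    (by positivity) (pow_le_one₀ (norm_nonneg _) (entry_norm_bound_of_unitary Q.2 _ _))

noncomputable def sqMoment (c i j : ι) : ℝ :=
  ∫ Q : orthogonalGroup ι ℝ, (Q : Matrix ι ι ℝ) i c ^ 2 * (Q : Matrix ι ι ℝ) j c ^ 2 ∂μ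

variable {μ} (c : ι)

section Invariant

variable [μ.IsMulLeftInvariant]

lemma sqMoment_swap (k l i j : ι) :
    sqMoment μ c (Equiv.swap k l i) (Equiv.swap k l j) = sqMoment μ c i j := by
  rcases eq_or_ne k l with rfl | hkl
  · simp
  have hg := planeRotation_mem_orthogonalGroup (0 : ℝ) 1 hkl (by norm_num)
  have := integral_comp_mul_left μ (fun M ↦ M i c ^ 2 * M j c ^ 2) hg
  simpa only [sqMoment, sq_planeRotation_zero_one_mul_apply hkl] using this

lemma sqMoment_eq_ite {i j : ι} (hij : i ≠ j) (k l : ι) :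
    sqMoment μ c k l = if k = l then sqMoment μ c i i else sqMoment μ c i j := by
  split_ifs with hkl
  · subst hkl
    simpa using (sqMoment_swap c k i k k).symm
  set m := Equiv.swap k i l
  have hmi : i ≠ m := by simpa [m] using (Equiv.swap k i).injective.ne hkl
  calc sqMoment μ c k l = sqMoment μ c i m := by
        simpa [m] using (sqMoment_swap c k i k l).symm
    _ = sqMoment μ c i j := by
        simpa [Equiv.swap_apply_of_ne_of_ne hmi hij] using sqMoment_swap c m j i j

lemma sqMoment_diag_eq_three_mul [IsFiniteMeasure μ] {i j : ι} (hij : i ≠ j) :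
    sqMoment μ c i i = 3 * sqMoment μ c i j := by
  obtain ⟨r, hr⟩ : ∃ r : ℝ, r ^ 2 = 1 / 2 := ⟨√(1 / 2), Real.sq_sqrt (by norm_num)⟩
  have hg := planeRotation_mem_orthogonalGroup r r hij (by linear_combination 2 * hr)
  have hint := integrable_sq_mul_sq μ
  have hrot : ∀ M : Matrix ι ι ℝ,
      (planeRotation i j r r * M) i c ^ 2 * (planeRotation i j r r * M) i c ^ 2
        + (planeRotation i j r r * M) j c ^ 2 * (planeRotation i j r r * M) j c ^ 2
      = 1 / 2 * (M i c ^ 2 * M i c ^ 2) + 3 * (M i c ^ 2 * M j c ^ 2)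
        + 1 / 2 * (M j c ^ 2 * M j c ^ 2) := fun M ↦ by
    rw [planeRotation_mul_apply_left _ _ hij, planeRotation_mul_apply_right _ _ hij]
    linear_combination
      (r ^ 2 + 1 / 2) * (2 * M i c ^ 4 + 12 * M i c ^ 2 * M j c ^ 2 + 2 * M j c ^ 4) * hr
  have hjj : sqMoment μ c j j = sqMoment μ c i i := by
    simpa [hij.symm] using sqMoment_eq_ite c hij j j
  have key : sqMoment μ c i i + sqMoment μ c j j
      = 1 / 2 * sqMoment μ c i i + 3 * sqMoment μ c i j + 1 / 2 * sqMoment μ c j j := by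
    simp only [sqMoment]
    rw [← integral_add (hint i i c) (hint j j c),
      ← integral_comp_mul_left μ (fun M ↦ M i c ^ 2 * M i c ^ 2 + M j c ^ 2 * M j c ^ 2) hg]
    simp only [hrot]
    rw [integral_add, integral_add, integral_const_mul, integral_const_mul, integral_const_mul]
    all_goals fun_prop
  linarith

end Invariant

lemma sum_sum_sqMoment [IsProbabilityMeasure μ] : ∑ k, ∑ l, sqMoment μ c k l = 1 := by
  have hint := integrable_sq_mul_sq μ
  simp only [sqMoment]
  simp_rw [← integral_finsetSum _ fun l _ ↦ hint _ l c]
  rw [← integral_finsetSum _ fun k _ ↦ integrable_finsetSum _ fun l _ ↦ hint k l c]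
  simp [← Finset.sum_mul_sum, sum_sq_apply_of_mem_orthogonalGroup (Subtype.prop _)]

lemma card_mul_card_add_two_mul_sqMoment [IsProbabilityMeasure μ] [μ.IsMulLeftInvariant]
    {i j : ι} (hij : i ≠ j) :
    (Fintype.card ι : ℝ) * (Fintype.card ι + 2) * sqMoment μ c i j = 1 := by
  have hite (k l : ι) :
      sqMoment μ c k l = sqMoment μ c i j + if k = l then 2 * sqMoment μ c i j else 0 := by
    rw [sqMoment_eq_ite c hij, sqMoment_diag_eq_three_mul c hij]
    split_ifs <;> ring
  rw [← sum_sum_sqMoment c (μ := μ)]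
  generalize sqMoment μ c i j = B at hite ⊢
  simp only [hite, Finset.sum_add_distrib, Finset.sum_ite_eq, Finset.mem_univ, if_true,
    Finset.sum_const, Finset.card_univ, nsmul_eq_mul]
  ring

end OrthogonalGroup

/-- fourth moments of entries of a Haar-distributed orthogonal matrix:
`∫ Q₁₁⁴ dμ = 3/(n(n+2))` and `∫ Q₁₁²Q₂₁² dμ = 1/(n(n+2))`. -/
theorem haar_orthogonal_fourth_moments
    (n : ℕ) (hn : 2 ≤ n)
    (μ : Measure ↥(Matrix.orthogonalGroup (Fin n) ℝ))
    [IsProbabilityMeasure μ] [μ.IsMulLeftInvariant] :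
    (∫ Q, ((Q : Matrix (Fin n) (Fin n) ℝ) ⟨0, by omega⟩ ⟨0, by omega⟩) ^ 4 ∂μ
        = 3 / ((n : ℝ) * ((n : ℝ) + 2))) ∧
    (∫ Q, ((Q : Matrix (Fin n) (Fin n) ℝ) ⟨0, by omega⟩ ⟨0, by omega⟩) ^ 2
          * ((Q : Matrix (Fin n) (Fin n) ℝ) ⟨1, by omega⟩ ⟨0, by omega⟩) ^ 2 ∂μ
        = 1 / ((n : ℝ) * ((n : ℝ) + 2))) := by
  set i : Fin n := ⟨0, by omega⟩
  set j : Fin n := ⟨1, by omega⟩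
  have hij : i ≠ j := by simp [i, j, Fin.ext_iff]
  have hfourth : ∫ Q, (Q : Matrix (Fin n) (Fin n) ℝ) i i ^ 4 ∂μ
      = 3 * OrthogonalGroup.sqMoment μ i i j := by
    rw [← OrthogonalGroup.sqMoment_diag_eq_three_mul i hij]
    simp only [OrthogonalGroup.sqMoment, ← pow_add]
  have htotal := OrthogonalGroup.card_mul_card_add_two_mul_sqMoment (μ := μ) i hij
  rw [Fintype.card_fin] at htotal
  have hpos : (0 : ℝ) < n * (n + 2) := by positivity
  refine ⟨?_, ?_⟩
  · rw [hfourth, eq_div_iff hpos.ne']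
    linear_combination 3 * htotal
  · change OrthogonalGroup.sqMoment μ i i j = _
    rw [eq_div_iff hpos.ne']
    linear_combination htotal
end

section
/- Let p ≥ 2 and n > p be integers. Then ∫_{B} x₁²·x₂² · (1 − ‖x‖₂²)^{(n−p−2)/2} dx = (1/(n(n+2))) · π^{p/2} · Γ((n−p)/2) / Γ(n/2), where B = {x ∈ ℝᵖ : ‖x‖₂ < 1} is the open unit ball and the integral is with respect to Lebesgue measure on ℝᵖ. -/
/-!
In polar coordinates the integral of a degree-`d` homogeneous function `P` against a radial weight
factors as the spherical integral of `P` times a one-dimensional radial integral. Applying this to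
both the weight `(1 - ‖x‖²)^α` on the unit ball and the Gaussian `exp (-‖x‖²)` on the whole space,
the unknown spherical moment of `x₁² x₂²` cancels. The Gaussian integral splits into a product of
one-dimensional Gaussian moments, and the radial integral over the ball becomes a Beta integral
after the substitution `u = r²`.
-/

open MeasureTheory Real Set Metric Module

theorem integral_Ioi_pow_mul_exp_neg_sq (m : ℕ) :
    ∫ r in Ioi (0 : ℝ), r ^ m * exp (-r ^ 2) = Gamma ((m + 1) / 2) / 2 := by
  have h := integral_rpow_mul_exp_neg_rpow two_pos
    (show (-1 : ℝ) < m by linarith [m.cast_nonneg (α := ℝ)])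
  simp only [rpow_natCast, rpow_two] at h
  rw [h]
  ring

theorem integral_pow_two_mul_mul_exp_neg_sq (k : ℕ) :
    ∫ t : ℝ, t ^ (2 * k) * exp (-t ^ 2) = Gamma (k + 1 / 2) :=
  calc ∫ t : ℝ, t ^ (2 * k) * exp (-t ^ 2) = ∫ t : ℝ, |t| ^ (2 * k) * exp (-|t| ^ 2) := by
        simp_rw [pow_mul, sq_abs]
    _ = 2 * ∫ t in Ioi (0 : ℝ), t ^ (2 * k) * exp (-t ^ 2) :=
        integral_comp_abs (f := fun t ↦ t ^ (2 * k) * exp (-t ^ 2))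
    _ = Gamma (k + 1 / 2) := by
        rw [integral_Ioi_pow_mul_exp_neg_sq]
        push_cast
        ring_nf

theorem integral_Ioo_rpow_mul_one_sub_rpow {a b : ℝ} (ha : 0 < a) (hb : 0 < b) :
    ∫ x in Ioo (0 : ℝ) 1, x ^ (a - 1) * (1 - x) ^ (b - 1)
      = Gamma a * Gamma b / Gamma (a + b) := by
  have hbeta : ((∫ x in Ioo (0 : ℝ) 1, x ^ (a - 1) * (1 - x) ^ (b - 1) : ℝ) : ℂ)
      = Complex.betaIntegral a b := by
    rw [← integral_complex_ofReal, Complex.betaIntegral,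
      intervalIntegral.integral_of_le zero_le_one, integral_Ioc_eq_integral_Ioo]
    refine setIntegral_congr_fun measurableSet_Ioo fun x hx ↦ ?_
    rw [Complex.ofReal_mul, Complex.ofReal_cpow hx.1.le,
      Complex.ofReal_cpow (sub_nonneg.2 hx.2.le)]
    push_cast
    ring
  apply Complex.ofReal_injective
  rw [hbeta, Complex.betaIntegral_eq_Gamma_mul_div _ _ (by simpa) (by simpa)]
  simp only [Complex.ofReal_div, Complex.ofReal_mul, ← Complex.Gamma_ofReal, Complex.ofReal_add]

theorem image_sq_Ioo_zero_one : (fun r : ℝ ↦ r ^ 2) '' Ioo 0 1 = Ioo 0 1 := by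
  ext u
  constructor
  · rintro ⟨r, ⟨hr₀, hr₁⟩, rfl⟩
    exact ⟨by positivity, by nlinarith⟩
  · rintro ⟨hu₀, hu₁⟩
    exact ⟨√u, ⟨sqrt_pos.2 hu₀, (sqrt_lt' one_pos).2 (by rwa [one_pow])⟩, sq_sqrt hu₀.le⟩

theorem integral_Ioo_pow_mul_one_sub_sq_rpow (m : ℕ) {α : ℝ} (hα : -1 < α) :
    ∫ r in Ioo (0 : ℝ) 1, r ^ m * (1 - r ^ 2) ^ α
      = Gamma ((m + 1) / 2) * Gamma (α + 1) / (2 * Gamma ((m + 1) / 2 + α + 1)) := by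
  have hsubst := integral_image_eq_integral_abs_deriv_smul (measurableSet_Ioo (a := 0) (b := 1))
    (fun r _ ↦ (hasDerivAt_pow 2 r).hasDerivWithinAt)
    ((pow_left_strictMonoOn₀ two_ne_zero).injOn.mono fun r hr ↦ hr.1.le)
    (fun u ↦ u ^ ((m + 1) / 2 - 1 : ℝ) * (1 - u) ^ (α + 1 - 1))
  rw [image_sq_Ioo_zero_one, integral_Ioo_rpow_mul_one_sub_rpow (by positivity) (by linarith)]
    at hsubst
  rw [mul_comm 2, ← div_div, add_assoc, hsubst, eq_div_iff two_ne_zero, ← integral_mul_const]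
  refine setIntegral_congr_fun measurableSet_Ioo fun r ⟨hr, _⟩ ↦ ?_
  have hpow : r * (r ^ 2) ^ ((m + 1) / 2 - 1 : ℝ) = r ^ m :=
    calc r * (r ^ 2) ^ ((m + 1) / 2 - 1 : ℝ)
        = r ^ (1 : ℝ) * r ^ ((2 : ℕ) * ((m + 1) / 2 - 1) : ℝ) := by
          rw [rpow_one, rpow_mul hr.le, rpow_natCast]
      _ = r ^ m := by
          rw [← rpow_add hr, ← rpow_natCast]
          congr 1
          push_cast
          ring
  rw [smul_eq_mul, abs_of_pos (by positivity), add_sub_cancel_right, ← hpow]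
  norm_num
  ring

theorem integral_volumeIoiPow (m : ℕ) (k : ℝ → ℝ) :
    ∫ r, k r ∂(Measure.volumeIoiPow m) = ∫ r in Ioi 0, r ^ m * k r := by
  simp only [Measure.volumeIoiPow, ENNReal.ofReal]
  rw [integral_withDensity_eq_integral_smul (measurable_subtype_coe.pow_const _).real_toNNReal,
    integral_subtype_comap measurableSet_Ioi fun r ↦ (r ^ m).toNNReal • k r]
  refine setIntegral_congr_fun measurableSet_Ioi fun r hr ↦ ?_
  rw [NNReal.smul_def, coe_toNNReal _ (pow_nonneg hr.out.le _), smul_eq_mul]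

section Polar

variable {E : Type*} [NormedAddCommGroup E] [NormedSpace ℝ E] [FiniteDimensional ℝ E]
  [MeasurableSpace E] [BorelSpace E] [Nontrivial E] (μ : Measure E) [μ.IsAddHaarMeasure]

theorem integral_eq_integral_sphere_prod_Ioi (f : E → ℝ) :
    ∫ x, f x ∂μ = ∫ q : sphere (0 : E) 1 × Ioi (0 : ℝ), f ((q.2 : ℝ) • (q.1 : E))
      ∂(μ.toSphere.prod (Measure.volumeIoiPow (finrank ℝ E - 1))) :=
  calc ∫ x, f x ∂μ = ∫ x : ({0}ᶜ : Set E), f x ∂(μ.comap (↑)) := by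
        rw [integral_subtype_comap (measurableSet_singleton _).compl, restrict_compl_singleton]
    _ = _ := by
      rw [← (Measure.measurePreserving_homeomorphUnitSphereProd μ).integral_comp
        (Homeomorph.measurableEmbedding _)]
      refine integral_congr_ae (Filter.Eventually.of_forall fun x ↦ ?_)
      simp [smul_inv_smul₀ (norm_ne_zero_iff.2 x.2)]

theorem integral_homogeneous_mul_radial {P : E → ℝ} {d : ℕ}
    (hP : ∀ r > (0 : ℝ), ∀ x, P (r • x) = r ^ d * P x) (g : ℝ → ℝ) :
    ∫ x, P x * g ‖x‖ ∂μ
      = (∫ u, P u ∂μ.toSphere) * ∫ r in Ioi 0, r ^ (finrank ℝ E - 1 + d) * g r := by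
  have hpolar : ∀ q : sphere (0 : E) 1 × Ioi (0 : ℝ),
      P ((q.2 : ℝ) • (q.1 : E)) * g ‖(q.2 : ℝ) • (q.1 : E)‖ = P q.1 * (q.2 ^ d * g q.2) := by
    rintro ⟨u, r, hr⟩
    rw [hP r hr, norm_smul, norm_of_nonneg hr.out.le, mem_sphere_zero_iff_norm.1 u.2, mul_one]
    ring
  rw [integral_eq_integral_sphere_prod_Ioi,
    integral_congr_ae (Filter.Eventually.of_forall hpolar),
    integral_prod_mul (fun u : sphere (0 : E) 1 ↦ P u) (fun r : Ioi (0 : ℝ) ↦ r ^ d * g r),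
    integral_volumeIoiPow _ fun r ↦ r ^ d * g r]
  simp_rw [pow_add, mul_assoc]

theorem integral_ball_homogeneous_mul_one_sub_norm_sq_rpow {P : E → ℝ} {d : ℕ}
    (hP : ∀ r > (0 : ℝ), ∀ x, P (r • x) = r ^ d * P x) {α : ℝ} (hα : -1 < α) :
    ∫ x in ball 0 1, P x * (1 - ‖x‖ ^ 2) ^ α ∂μ
      = (∫ x, P x * exp (-‖x‖ ^ 2) ∂μ) * Gamma (α + 1)
          / Gamma ((finrank ℝ E + d) / 2 + α + 1) := by
  set N := finrank ℝ E - 1 + d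
  have hindicator : (ball (0 : E) 1).indicator (fun x ↦ P x * (1 - ‖x‖ ^ 2) ^ α)
      = fun x ↦ P x * (Iio 1).indicator (fun r ↦ (1 - r ^ 2) ^ α) ‖x‖ := by
    ext x
    simp only [indicator, mem_ball_zero_iff, mem_Iio]
    split_ifs <;> simp
  have hradial : ∫ r in Ioi (0 : ℝ), r ^ N * (Iio 1).indicator (fun r ↦ (1 - r ^ 2) ^ α) r
      = ∫ r in Ioo (0 : ℝ) 1, r ^ N * (1 - r ^ 2) ^ α := by
    simp_rw [← indicator_mul_right _ fun r : ℝ ↦ r ^ N]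
    rw [setIntegral_indicator measurableSet_Iio, Ioi_inter_Iio]
  have hdim : (N : ℝ) + 1 = finrank ℝ E + d := by
    have := finrank_pos (R := ℝ) (M := E)
    norm_cast
    omega
  rw [← integral_indicator measurableSet_ball, hindicator, integral_homogeneous_mul_radial μ hP,
    integral_homogeneous_mul_radial μ hP fun r ↦ exp (-r ^ 2), hradial,
    integral_Ioo_pow_mul_one_sub_sq_rpow _ hα, integral_Ioi_pow_mul_exp_neg_sq, hdim]
  ring

end Polar

namespace EuclideanSpace

variable {ι : Type*} [Fintype ι]

theorem integral_prod_eq_prod_integral (f : ι → ℝ → ℝ) :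
    ∫ x : EuclideanSpace ℝ ι, ∏ i, f i (x i) = ∏ i, ∫ t, f i t :=
  ((volume_preserving_symm_measurableEquiv_toLp ι).integral_comp'
    fun y : ι → ℝ ↦ ∏ i, f i (y i)).trans (integral_fintype_prod_volume_eq_prod f)

theorem integral_prod_pow_mul_exp_neg_norm_sq (k : ι → ℕ) :
    ∫ x : EuclideanSpace ℝ ι, (∏ i, x i ^ (2 * k i)) * exp (-‖x‖ ^ 2)
      = ∏ i, Gamma (k i + 1 / 2) := by
  have hsplit : ∀ x : EuclideanSpace ℝ ι,
      (∏ i, x i ^ (2 * k i)) * exp (-‖x‖ ^ 2) = ∏ i, x i ^ (2 * k i) * exp (-x i ^ 2) := by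
    intro x
    rw [Finset.prod_mul_distrib, ← exp_sum, norm_sq_eq, ← Finset.sum_neg_distrib]
    simp only [norm_eq_abs, sq_abs]
  simp_rw [hsplit, integral_prod_eq_prod_integral fun i t ↦ t ^ (2 * k i) * exp (-t ^ 2),
    integral_pow_two_mul_mul_exp_neg_sq]

theorem integral_sq_mul_sq_mul_exp_neg_norm_sq {i j : ι} (hij : i ≠ j) :
    ∫ x : EuclideanSpace ℝ ι, x i ^ 2 * x j ^ 2 * exp (-‖x‖ ^ 2)
      = π ^ (Fintype.card ι / 2 : ℝ) / 4 := by
  classical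
  set k : ι → ℕ := fun l ↦ if l ∈ ({i, j} : Finset ι) then 1 else 0
  have hmonomial : ∀ x : EuclideanSpace ℝ ι, ∏ l, x l ^ (2 * k l) = x i ^ 2 * x j ^ 2 := by
    intro x
    simp only [k, mul_ite, mul_one, mul_zero, pow_ite, pow_zero, Finset.prod_ite_mem,
      Finset.univ_inter, Finset.prod_pair hij]
  have hgamma : ∀ l, Gamma (k l + 1 / 2)
      = √π * if l ∈ ({i, j} : Finset ι) then 1 / 2 else 1 := by
    intro l
    split_ifs with hl
    · rw [show k l = 1 from if_pos hl, Nat.cast_one, add_comm, Gamma_add_one (by norm_num),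
        Gamma_one_half_eq, mul_comm]
    · rw [show k l = 0 from if_neg hl, Nat.cast_zero, zero_add, Gamma_one_half_eq, mul_one]
  simp_rw [← hmonomial, integral_prod_pow_mul_exp_neg_norm_sq, hgamma, Finset.prod_mul_distrib,
    Finset.prod_const, Finset.prod_ite_mem, Finset.univ_inter, Finset.prod_pair hij,
    Finset.card_univ, sqrt_eq_rpow, ← rpow_natCast, ← rpow_mul pi_pos.le]
  ring_nf

end EuclideanSpace

/-- `∫_{‖x‖<1} x₁²x₂² (1−‖x‖²)^{(n−p−2)/2} dx
  = (1/(n(n+2))) π^{p/2} Γ((n−p)/2)/Γ(n/2)`. -/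
theorem ball_integral_mixed_fourth_power
    (p n : ℕ) (hp : 2 ≤ p) (hnp : p < n) :
    ∫ x in Metric.ball (0 : EuclideanSpace ℝ (Fin p)) 1,
        (x ⟨0, by omega⟩) ^ 2 * (x ⟨1, by omega⟩) ^ 2
          * (1 - ‖x‖ ^ 2) ^ (((n : ℝ) - (p : ℝ) - 2) / 2)
      = (1 / ((n : ℝ) * ((n : ℝ) + 2))) * Real.pi ^ ((p : ℝ) / 2)
          * Real.Gamma (((n : ℝ) - (p : ℝ)) / 2) / Real.Gamma ((n : ℝ) / 2) := by
  have : Nontrivial (Fin p) := Fin.nontrivial_iff_two_le.2 hp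
  have hpn : (p : ℝ) < n := by exact_mod_cast hnp
  have hn : (0 : ℝ) < n / 2 := by linarith [p.cast_nonneg (α := ℝ)]
  have hhomogeneous : ∀ r > (0 : ℝ), ∀ x : EuclideanSpace ℝ (Fin p),
      (r • x) ⟨0, by omega⟩ ^ 2 * (r • x) ⟨1, by omega⟩ ^ 2
        = r ^ 4 * (x ⟨0, by omega⟩ ^ 2 * x ⟨1, by omega⟩ ^ 2) := by
    intro r _ x
    simp only [PiLp.smul_apply, smul_eq_mul]
    ring
  rw [integral_ball_homogeneous_mul_one_sub_norm_sq_rpow volume hhomogeneous (by linarith),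
    EuclideanSpace.integral_sq_mul_sq_mul_exp_neg_norm_sq (by simp [Fin.ext_iff]),
    finrank_euclideanSpace_fin, Fintype.card_fin,
    show ((n : ℝ) - p - 2) / 2 + 1 = (n - p) / 2 by ring,
    show ((p : ℝ) + (4 : ℕ)) / 2 + (n - p - 2) / 2 + 1 = n / 2 + 1 + 1 by push_cast; ring,
    Gamma_add_one (by positivity), Gamma_add_one hn.ne']
  have := (Gamma_pos_of_pos hn).ne'
  field_simp
  ring
end
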